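/- Let Δ be a proper geometric simplicial complex in ℝ^d and ω a linear differential. Assume that Δ has no missing faces of dimension > k for some k ≥ 0 and that (Δ,ω) is toric k-chordal. Then the kernel of ω : S_{i+1}(Δ) → S_{i}(Δ) is zero for all i ≥ k. -/

import Mathlib

open MvPolynomial

open MvPolynomial

/-- An abstract simplicial complex on the vertex set `Fin n`:
a collection of finite subsets closed under taking subsets. -/
def IsComplex {n : ℕ} (Δ : Set (Finset (Fin n))) : Prop :=
  ∀ σ ∈ Δ, ∀ τ ⊆ σ, τ ∈ Δ

/-- The vertex set `Δ^(0)` of a simplicial complex. -/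
def verts {n : ℕ} (Δ : Set (Finset (Fin n))) : Set (Fin n) := {v | {v} ∈ Δ}

/-- The partial derivative `∂/∂xᵢ` as a linear endomorphism of `ℝ[x₁,…,xₙ]`. -/
noncomputable def pd {n : ℕ} (i : Fin n) : Module.End ℝ (MvPolynomial (Fin n) ℝ) :=
  (pderiv i).toLinearMap

/-- The constant coefficient differential operator `(x^a)^∨ = ∏ᵢ (∂/∂xᵢ)^(aᵢ)`. -/
noncomputable def monDiff {n : ℕ} (a : Fin n →₀ ℕ) : Module.End ℝ (MvPolynomial (Fin n) ℝ) :=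
  ((List.finRange n).map fun i => pd i ^ a i).prod

/-- The stress space `S̃(Δ)`: polynomials annihilated by `q^∨` for every `q` in the
nonface ideal `I_Δ` (equivalently, by `(x^a)^∨` for every monomial generator `x^a` of `I_Δ`). -/
noncomputable def tStress {n : ℕ} (Δ : Set (Finset (Fin n))) :
    Submodule ℝ (MvPolynomial (Fin n) ℝ) :=
  ⨅ a ∈ {a : Fin n →₀ ℕ | a.support ∉ Δ}, LinearMap.ker (monDiff a)

/-- A linear differential `Σᵢ cᵢ ∂/∂xᵢ`. -/
noncomputable def linDiff {n : ℕ} (c : Fin n → ℝ) : Module.End ℝ (MvPolynomial (Fin n) ℝ) :=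
  ∑ i, c i • pd i

/-- The canonical differential `δ = Σᵢ ∂/∂xᵢ`. -/
noncomputable def canDiff (n : ℕ) : Module.End ℝ (MvPolynomial (Fin n) ℝ) :=
  linDiff fun _ => (1 : ℝ)

/-- The coordinate differential `θⱼ = Σᵢ (vᵢ)ⱼ ∂/∂xᵢ` of a geometric simplicial complex. -/
noncomputable def coordDiff {n d : ℕ} (V : Fin n → Fin d → ℝ) (j : Fin d) :
    Module.End ℝ (MvPolynomial (Fin n) ℝ) :=
  linDiff fun i => V i j

/-- The stress space `S(Δ)` of a geometric simplicial complex with vertex coordinates `V`. -/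
noncomputable def stress {n d : ℕ} (V : Fin n → Fin d → ℝ) (Δ : Set (Finset (Fin n))) :
    Submodule ℝ (MvPolynomial (Fin n) ℝ) :=
  tStress Δ ⊓ ⨅ j : Fin d, LinearMap.ker (coordDiff V j)

/-- The degree-`k` graded piece `S_k(Δ)` of the stress space. -/
noncomputable def stressK {n d : ℕ} (V : Fin n → Fin d → ℝ) (Δ : Set (Finset (Fin n)))
    (k : ℕ) : Submodule ℝ (MvPolynomial (Fin n) ℝ) :=
  stress V Δ ⊓ homogeneousSubmodule (Fin n) ℝ k

/-- A geometric simplicial complex in `ℝ^d` is proper if the coordinates of each face of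
dimension `< d` are linearly independent. -/
def IsProper {n d : ℕ} (V : Fin n → Fin d → ℝ) (Δ : Set (Finset (Fin n))) : Prop :=
  ∀ σ ∈ Δ, σ.card ≤ d → LinearIndependent ℝ (fun i : {x // x ∈ σ} => V i.1)

/-- The star of a face. -/
def cStar {n : ℕ} (Δ : Set (Finset (Fin n))) (σ : Finset (Fin n)) : Set (Finset (Fin n)) :=
  {τ ∈ Δ | σ ∪ τ ∈ Δ}

/-- The star of a vertex. -/
def vStar {n : ℕ} (Δ : Set (Finset (Fin n))) (v : Fin n) : Set (Finset (Fin n)) :=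
  cStar Δ {v}

/-- The boundary `∂St_v Δ` of the star of a vertex: faces of the star not containing `v`. -/
def vStarBd {n : ℕ} (Δ : Set (Finset (Fin n))) (v : Fin n) : Set (Finset (Fin n)) :=
  {τ ∈ vStar Δ v | v ∉ τ}

/-- The link of a face. -/
def lk {n : ℕ} (Δ : Set (Finset (Fin n))) (σ : Finset (Fin n)) : Set (Finset (Fin n)) :=
  {τ | Disjoint σ τ ∧ σ ∪ τ ∈ Δ}

/-- The vertex set `γ^(0)` of the support of a stress `γ`. -/
noncomputable def stressVerts {n : ℕ} (γ : MvPolynomial (Fin n) ℝ) : Finset (Fin n) :=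
  γ.support.biUnion fun a => a.support

/-- `g_k = dim S_k − dim S_{k−1}` (with `S_{−1} = 0`). -/
noncomputable def gnum {n d : ℕ} (V : Fin n → Fin d → ℝ) (Δ : Set (Finset (Fin n)))
    (k : ℕ) : ℤ :=
  (Module.finrank ℝ ↥(stressK V Δ k) : ℤ) -
    if k = 0 then 0 else (Module.finrank ℝ ↥(stressK V Δ (k - 1)) : ℤ)

/-- The homogenizing embedding `ℝ^d → ℝ^d × {1} ⊆ ℝ^{d+1}` applied to vertex coordinates. -/
noncomputable def homV {n d : ℕ} (p : Fin n → Fin d → ℝ) : Fin n → Fin (d + 1) → ℝ :=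
  fun i => Fin.snoc (p i) 1

/-- `Δ` is the boundary complex of the simplicial `d`-polytope `conv{p 1, …, p n}`:
the polytope is full-dimensional, every `p i` is a vertex, the faces of `Δ` are exactly the
vertex sets cut out by supporting hyperplanes, and every proper face is a simplex. -/
def IsSimplicialPolytopeBoundary {n d : ℕ} (p : Fin n → Fin d → ℝ)
    (Δ : Set (Finset (Fin n))) : Prop :=
  affineSpan ℝ (Set.range p) = ⊤ ∧
  (∀ i, p i ∉ convexHull ℝ (p '' {j | j ≠ i})) ∧
  (∀ σ ∈ Δ, AffineIndependent ℝ (fun i : {x // x ∈ σ} => p i.1)) ∧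
  (∀ σ : Finset (Fin n), σ ∈ Δ ↔
    ∃ (f : (Fin d → ℝ) →ₗ[ℝ] ℝ) (c : ℝ),
      (∃ i, f (p i) < c) ∧ (∀ i, f (p i) ≤ c) ∧ (∀ i, f (p i) = c ↔ i ∈ σ))

/-- The simplicial boundary operator (with real coefficients), on the free module spanned by
all finite subsets of `Fin n`; the empty set plays the role of the `(−1)`-face, so that the
associated homology is reduced. -/
noncomputable def bdry {n : ℕ} : (Finset (Fin n) →₀ ℝ) →ₗ[ℝ] (Finset (Fin n) →₀ ℝ) :=
  Finsupp.lsum ℝ fun σ => LinearMap.toSpanSingleton ℝ _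
    (∑ i ∈ σ, ((-1 : ℝ) ^ (σ.filter (· < i)).card) • Finsupp.single (σ.erase i) (1 : ℝ))

/-- The space of simplicial `k`-chains of `Δ` (spanned by faces of `Δ` of dimension `k`). -/
noncomputable def chains {n : ℕ} (Δ : Set (Finset (Fin n))) (k : ℤ) :
    Submodule ℝ (Finset (Fin n) →₀ ℝ) :=
  Finsupp.supported ℝ ℝ {σ | σ ∈ Δ ∧ (σ.card : ℤ) = k + 1}

/-- Reduced simplicial `k`-cycles of `Δ`. -/
noncomputable def cycles {n : ℕ} (Δ : Set (Finset (Fin n))) (k : ℤ) :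
    Submodule ℝ (Finset (Fin n) →₀ ℝ) :=
  chains Δ k ⊓ LinearMap.ker bdry

/-- Simplicial `k`-boundaries of `Δ`. -/
noncomputable def bdries {n : ℕ} (Δ : Set (Finset (Fin n))) (k : ℤ) :
    Submodule ℝ (Finset (Fin n) →₀ ℝ) :=
  Submodule.map bdry (chains Δ (k + 1))

/-- The reduced Betti number `β̃_k(Δ)` (with real coefficients). -/
noncomputable def rBetti {n : ℕ} (Δ : Set (Finset (Fin n))) (k : ℤ) : ℕ :=
  Module.finrank ℝ ↥(cycles Δ k) - Module.finrank ℝ ↥(bdries Δ k)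

/-- The induced subcomplex `Δ_W` on a vertex set `W`. -/
def induced {n : ℕ} (Δ : Set (Finset (Fin n))) (W : Finset (Fin n)) : Set (Finset (Fin n)) :=
  {σ ∈ Δ | σ ⊆ W}

/-- The vertex set of the support of a simplicial chain. -/
def chainVerts {n : ℕ} (c : Finset (Fin n) →₀ ℝ) : Finset (Fin n) :=
  c.support.biUnion id

/-- `Δ` is resolution `k`-chordal: every `k`-cycle `z` admits a resolution, i.e. a
`(k+1)`-chain `c` with `∂c = z` and `c^(0) = z^(0)`. -/
def ResolutionChordal {n : ℕ} (Δ : Set (Finset (Fin n))) (k : ℤ) : Prop :=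
  ∀ z ∈ cycles Δ k, ∃ c ∈ chains Δ (k + 1), bdry c = z ∧ chainVerts c = chainVerts z

/-- `(Δ, ω)` is toric `k`-chordal: `ω : S_{k+1}(Δ) → S_k(Δ)` is surjective and
`ω : S_k(Δ) → S_{k−1}(Δ)` is injective. -/
def ToricChordal {n d : ℕ} (V : Fin n → Fin d → ℝ) (Δ : Set (Finset (Fin n)))
    (ω : Module.End ℝ (MvPolynomial (Fin n) ℝ)) (k : ℕ) : Prop :=
  (∀ γ ∈ stressK V Δ k, ∃ γ' ∈ stressK V Δ (k + 1), ω γ' = γ) ∧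
  (∀ γ ∈ stressK V Δ k, ω γ = 0 → γ = 0)

/-- `(Δ, ω)` is weakly toric `k`-chordal: `ω : S_k(St_v Δ) → S_{k−1}(St_v Δ)` is injective
for every vertex `v` of `Δ`. -/
def WeaklyToricChordal {n d : ℕ} (V : Fin n → Fin d → ℝ) (Δ : Set (Finset (Fin n)))
    (ω : Module.End ℝ (MvPolynomial (Fin n) ℝ)) (k : ℕ) : Prop :=
  ∀ v ∈ verts Δ, ∀ γ ∈ stressK V (vStar Δ v) k, ω γ = 0 → γ = 0

/-- A missing face of `Δ`: a nonface all of whose proper subsets are faces. -/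
def IsMissingFace {n : ℕ} (Δ : Set (Finset (Fin n))) (σ : Finset (Fin n)) : Prop :=
  σ ∉ Δ ∧ ∀ τ ⊂ σ, τ ∈ Δ

/-- Representatives of relative `k`-stresses of the relative complex `(Δ', Γ)`:
homogeneous degree-`k` elements of `S̃(Δ')` whose image under each coordinate differential
lies in `S̃(Γ)`.  The relative stress space `S_k(Δ', Γ)` is the quotient of this space by
(the degree-`k` part of) `S̃(Γ)`. -/
noncomputable def relStressK {n d : ℕ} (V : Fin n → Fin d → ℝ)
    (Δ' Γ : Set (Finset (Fin n))) (k : ℕ) : Submodule ℝ (MvPolynomial (Fin n) ℝ) :=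
  tStress Δ' ⊓ homogeneousSubmodule (Fin n) ℝ k ⊓
    ⨅ j : Fin d, (tStress Γ).comap (coordDiff V j)

/-- A shelling of a pure `(d−1)`-dimensional simplicial complex: a linear order on the facets
such that the intersection of each facet with the union of all subsequent facets is a pure
`(d−2)`-dimensional complex or empty. -/
def IsShelling {n : ℕ} (Δ : Set (Finset (Fin n))) (d : ℕ) (L : List (Finset (Fin n))) : Prop :=
  L.Nodup ∧ (∀ σ, σ ∈ L ↔ σ ∈ Δ ∧ σ.card = d) ∧
  (∀ σ ∈ Δ, ∃ F ∈ L, σ ⊆ F) ∧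
  ∀ (i : ℕ) (hi : i < L.length) (τ : Finset (Fin n)), τ ⊆ L.get ⟨i, hi⟩ →
    (∃ (j : ℕ) (hj : j < L.length), i < j ∧ τ ⊆ L.get ⟨j, hj⟩) →
    ∃ ρ, τ ⊆ ρ ∧ ρ ⊆ L.get ⟨i, hi⟩ ∧ ρ.card = d - 1 ∧
      ∃ (j : ℕ) (hj : j < L.length), i < j ∧ ρ ⊆ L.get ⟨j, hj⟩

/-- The degree-`k` graded piece of the stress space `S̃(Δ)`. -/
noncomputable def tStressK {n : ℕ} (Δ : Set (Finset (Fin n))) (k : ℕ) :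
    Submodule ℝ (MvPolynomial (Fin n) ℝ) :=
  tStress Δ ⊓ homogeneousSubmodule (Fin n) ℝ k

/-- A sequence `θ` of linear differentials is regular up to degree `k` on `S̃(Δ)`: each
`θ_j` maps the degree-`(i+1)` part of the common kernel of `θ_1, …, θ_{j−1}` in `S̃(Δ)` onto
the degree-`i` part, for every `i ≤ k`. -/
def RegularUpTo {n : ℕ} (Δ : Set (Finset (Fin n)))
    (θ : List (Module.End ℝ (MvPolynomial (Fin n) ℝ))) (k : ℕ) : Prop :=
  ∀ j < θ.length, ∀ i ≤ k,
    ∀ γ ∈ tStressK Δ i ⊓ ⨅ l ∈ Finset.range j, LinearMap.ker (θ.getD l 0),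
      ∃ γ' ∈ tStressK Δ (i + 1) ⊓ ⨅ l ∈ Finset.range j, LinearMap.ker (θ.getD l 0),
        θ.getD j 0 γ' = γ

/-- `dim Δ + 1`: the maximal cardinality of a face. -/
noncomputable def dim1 {n : ℕ} (Δ : Set (Finset (Fin n))) : ℕ :=
  sSup {m | ∃ σ ∈ Δ, σ.card = m}

/-- `Δ` is Cohen–Macaulay over `ℝ`: the reduced homology of every face link vanishes below
the expected dimension. -/
def IsCM {n : ℕ} (Δ : Set (Finset (Fin n))) : Prop :=
  ∀ σ ∈ Δ, ∀ i : ℤ, i < (dim1 Δ : ℤ) - 1 - σ.card →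
    cycles (lk Δ σ) i ≤ bdries (lk Δ σ) i

/-- `(q, T)` is a triangulation of the simplicial polytope `P = conv{p i}` whose faces contained
in the boundary `∂P` form exactly the boundary complex `Δ` of `P`. -/
def IsTriangulation {n d m : ℕ} (p : Fin n → Fin d → ℝ) (Δ : Set (Finset (Fin n)))
    (q : Fin m → Fin d → ℝ) (T : Set (Finset (Fin m))) : Prop :=
  IsComplex T ∧
  (∀ σ ∈ T, AffineIndependent ℝ (fun i : {x // x ∈ σ} => q i.1)) ∧
  (∀ σ ∈ T, ∀ τ ∈ T,
    convexHull ℝ (q '' ↑σ) ∩ convexHull ℝ (q '' ↑τ) = convexHull ℝ (q '' ↑(σ ∩ τ))) ∧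
  (⋃ σ ∈ T, convexHull ℝ (q '' ↑σ)) = convexHull ℝ (Set.range p) ∧
  {s : Set (Fin d → ℝ) | ∃ σ ∈ T,
      convexHull ℝ (q '' ↑σ) ⊆ frontier (convexHull ℝ (Set.range p)) ∧ s = q '' ↑σ}
    = {s : Set (Fin d → ℝ) | ∃ σ ∈ Δ, s = p '' ↑σ}

/-- The restriction `Δ_S` of a balanced complex to the set `S` of colors. -/
def colorRestrict {n d : ℕ} (Δ : Set (Finset (Fin n))) (col : Fin n → Fin d)
    (S : Finset (Fin d)) : Set (Finset (Fin n)) :=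
  {σ ∈ Δ | ∀ v ∈ σ, col v ∈ S}


/-!
Partial derivatives commute with every constant-coefficient differential operator, so each
`∂/∂xᵤ` maps `S_{m+1}(Δ)` to `S_m(Δ)` and commutes with `ω`. Hence if `ωγ = 0` for
`γ ∈ S_{m+1}(Δ)`, every `∂γ/∂xᵤ` lies in the kernel of `ω` on `S_m(Δ)`, which is trivial by
induction starting from `m = k`; by Euler's identity a homogeneous polynomial of positive degree
all of whose partial derivatives vanish is zero.
-/

namespace MvPolynomial

theorem pderiv_pderiv_comm {σ R : Type*} [CommSemiring R] (i j : σ) (f : MvPolynomial σ R) :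
    pderiv i (pderiv j f) = pderiv j (pderiv i f) := by
  classical
  obtain rfl | hij := eq_or_ne i j
  · rfl
  ext m
  simp only [coeff_pderiv, add_right_comm m (Finsupp.single i 1), Finsupp.add_apply,
    Finsupp.single_eq_of_ne hij, Finsupp.single_eq_of_ne hij.symm, add_zero]
  ring

theorem IsHomogeneous.eq_zero_of_forall_pderiv_eq_zero {σ K : Type*} [Fintype σ] [Field K]
    [CharZero K] {φ : MvPolynomial σ K} {n : ℕ} (hφ : φ.IsHomogeneous n) (hn : n ≠ 0)
    (h : ∀ i, pderiv i φ = 0) : φ = 0 := by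
  have euler := hφ.sum_X_mul_pderiv
  simp only [h, mul_zero, Finset.sum_const_zero] at euler
  rw [← Nat.cast_smul_eq_nsmul K] at euler
  exact (smul_eq_zero.1 euler.symm).resolve_left (Nat.cast_ne_zero.2 hn)

end MvPolynomial

section Stresses

variable {n : ℕ}

theorem commute_pd (i j : Fin n) : Commute (pd i) (pd j) :=
  LinearMap.ext fun f => pderiv_pderiv_comm i j f

theorem commute_pd_monDiff (u : Fin n) (a : Fin n →₀ ℕ) : Commute (pd u) (monDiff a) :=
  Commute.list_prod_right _ _ <| by
    simp only [List.mem_map]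
    rintro _ ⟨i, -, rfl⟩
    exact (commute_pd u i).pow_right _

theorem commute_pd_linDiff (u : Fin n) (c : Fin n → ℝ) : Commute (pd u) (linDiff c) :=
  Commute.sum_right _ _ _ fun i _ => (commute_pd u i).smul_right (c i)

theorem pd_mem_tStress {Δ : Set (Finset (Fin n))} {γ : MvPolynomial (Fin n) ℝ} (u : Fin n)
    (hγ : γ ∈ tStress Δ) : pd u γ ∈ tStress Δ := by
  simp only [tStress, Submodule.mem_iInf, LinearMap.mem_ker] at hγ ⊢
  intro a ha
  rw [← Module.End.mul_apply, ← (commute_pd_monDiff u a).eq, Module.End.mul_apply, hγ a ha,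
    map_zero]

theorem pd_mem_ker_linDiff {c : Fin n → ℝ} {γ : MvPolynomial (Fin n) ℝ} (u : Fin n)
    (hγ : linDiff c γ = 0) : linDiff c (pd u γ) = 0 := by
  rw [← Module.End.mul_apply, ← (commute_pd_linDiff u c).eq, Module.End.mul_apply, hγ, map_zero]

variable {d : ℕ} {V : Fin n → Fin d → ℝ} {Δ : Set (Finset (Fin n))}

theorem pd_mem_stressK {m : ℕ} {γ : MvPolynomial (Fin n) ℝ} (u : Fin n)
    (hγ : γ ∈ stressK V Δ (m + 1)) : pd u γ ∈ stressK V Δ m := by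
  simp only [stressK, stress, Submodule.mem_inf, Submodule.mem_iInf, LinearMap.mem_ker,
    mem_homogeneousSubmodule, coordDiff] at hγ ⊢
  obtain ⟨⟨hΔ, hV⟩, hhom⟩ := hγ
  exact ⟨⟨pd_mem_tStress u hΔ, fun j => pd_mem_ker_linDiff u (hV j)⟩, hhom.pderiv⟩

theorem linDiff_ker_trivial_stressK_succ {c : Fin n → ℝ} {m : ℕ}
    (hm : ∀ γ ∈ stressK V Δ m, linDiff c γ = 0 → γ = 0) :
    ∀ γ ∈ stressK V Δ (m + 1), linDiff c γ = 0 → γ = 0 := by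
  intro γ hγ hω
  have hhom : γ.IsHomogeneous (m + 1) := (mem_homogeneousSubmodule _ _).1 hγ.2
  exact hhom.eq_zero_of_forall_pderiv_eq_zero m.succ_ne_zero fun u =>
    hm _ (pd_mem_stressK u hγ) (pd_mem_ker_linDiff u hω)

end Stresses

theorem stmt8_general {n d : ℕ} (V : Fin n → Fin d → ℝ) (Δ : Set (Finset (Fin n)))
    (c : Fin n → ℝ) (k : ℕ)
    (h2 : ToricChordal V Δ (linDiff c) k) :
    ∀ i : ℕ, k ≤ i → ∀ γ ∈ stressK V Δ (i + 1), linDiff c γ = 0 → γ = 0 := by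
  intro i hi
  induction i, hi using Nat.le_induction with
  | base => exact linDiff_ker_trivial_stressK_succ h2.2
  | succ m _ ih => exact linDiff_ker_trivial_stressK_succ ih

theorem stmt8 {n d : ℕ} (V : Fin n → Fin d → ℝ) (Δ : Set (Finset (Fin n)))
    (hΔ : IsComplex Δ) (hp : IsProper V Δ) (c : Fin n → ℝ) (k : ℕ)
    (h1 : ∀ σ : Finset (Fin n), IsMissingFace Δ σ → σ.card ≤ k + 1)
    (h2 : ToricChordal V Δ (linDiff c) k) :
    ∀ i : ℕ, k ≤ i → ∀ γ ∈ stressK V Δ (i + 1), linDiff c γ = 0 → γ = 0 :=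
  stmt8_general V Δ c k h2
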